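/- arXiv:1706.02744 — 5 statements merged into one kernel-verified Lean document; each statement's English description precedes it below -/
import Mathlib

section
/- Let (Ω, ℱ, ℙ) be a probability space, N : Ω → E a random variable with values in a measurable space E, g : E → ℝ measurable with g(N) integrable, μ_X ∈ ℝ, and r : ℝ → ℝ measurable. For each p ∈ ℝ define the intervened feature X_p = g(N) + μ_X·p and the predictor R_p = r(X_p − E[X_p]). Then R_p = r(g(N) − E[g(N)]) pointwise for every p; in particular, for all p, p' ∈ ℝ the laws of R_p and R_{p'} coincide, i.e. the predictor exhibits no proxy discrimination. -/
open MeasureTheory ProbabilityTheory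

/-- **Theorem 3 (no proxy discrimination for adjusted predictors).**
Under the intervention `do(P = p)` the feature is `X p = g ∘ N + μX • p` and the
predictor is `R p = r (X p - E[X p])`.  Then `R p = r (g ∘ N - E[g ∘ N])`
pointwise for every `p`; in particular the laws of `R p` and `R p'` coincide for
all `p, p'`, i.e. the predictor exhibits no proxy discrimination. -/
theorem no_proxy_discrimination
    {Ω : Type*} [MeasureSpace Ω] [IsProbabilityMeasure (ℙ : Measure Ω)]
    {E : Type*} [MeasurableSpace E]
    (N : Ω → E) (hN : Measurable N)
    (g : E → ℝ) (hg : Measurable g)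
    (hint : Integrable (fun ω => g (N ω)) ℙ)
    (μX : ℝ) (r : ℝ → ℝ) (hr : Measurable r)
    (X : ℝ → Ω → ℝ) (hX : ∀ p ω, X p ω = g (N ω) + μX * p)
    (R : ℝ → Ω → ℝ)
    (hR : ∀ p ω, R p ω = r (X p ω - ∫ ω', X p ω' ∂ℙ)) :
    (∀ p ω, R p ω = r (g (N ω) - ∫ ω', g (N ω') ∂ℙ)) ∧
      ∀ p p' : ℝ, Measure.map (R p) (ℙ : Measure Ω) = Measure.map (R p') (ℙ : Measure Ω) := by
  have key : ∀ p ω, R p ω = r (g (N ω) - ∫ ω', g (N ω') ∂ℙ) := by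
    intro p ω
    have hInt : (∫ ω', X p ω' ∂ℙ) = (∫ ω', g (N ω') ∂ℙ) + μX * p := by
      have : (∫ ω', X p ω' ∂ℙ) = ∫ ω', (g (N ω') + μX * p) ∂ℙ := by
        apply integral_congr_ae
        filter_upwards with ω' using hX p ω'
      rw [this, integral_add hint (integrable_const _), integral_const]
      simp
    rw [hR, hX, hInt]
    ring_nf
  refine ⟨key, fun p p' => ?_⟩
  have : R p = R p' := by
    funext ω; rw [key p ω, key p' ω]
  rw [this]
end

section
/- Let η and N_X be real random variables on a probability space and let α_X, β, λ_E, λ_X be real constants with α_X ≠ 0. For each a ∈ ℝ define the predictor R_a = λ_E·η + λ_X·(α_X·a + β·η + N_X). Then the law of R_a is the same for all a ∈ ℝ if and only if λ_X = 0. -/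
open MeasureTheory ProbabilityTheory Filter Topology

/-! Shifting the attribute `a` by one unit shifts `R a` by the constant `lamX * αX`, so invariance of
the law of `R a` in `a` makes the law of `R 0` invariant under a nonzero translation. The
distribution function of such a law is periodic, hence constant since it tends to `1` at `+∞`;
this contradicts its limit `0` at `-∞`. -/

theorem Function.Periodic.eq_of_tendsto_atTop {α : Type*} [TopologicalSpace α] [T2Space α]
    {f : ℝ → α} {c : ℝ} {a : α} (hf : Function.Periodic f c) (hc : c ≠ 0)
    (hlim : Tendsto f atTop (𝓝 a)) (x : ℝ) : f x = a := by
  obtain ⟨p, hp, hfp⟩ : ∃ p > 0, Function.Periodic f p := by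
    rcases hc.lt_or_gt with hc | hc
    · exact ⟨-c, neg_pos.2 hc, hf.neg⟩
    · exact ⟨c, hc, hf⟩
  have hseq : Tendsto (fun n : ℕ => x + n * p) atTop atTop :=
    tendsto_atTop_add_const_left _ _ (tendsto_natCast_atTop_atTop.atTop_mul_const hp)
  have hconst : (f ∘ fun n : ℕ => x + n * p) = fun _ => f x :=
    funext fun n => hfp.nat_mul n x
  have hlim' := hlim.comp hseq
  rw [hconst] at hlim'
  exact tendsto_nhds_unique tendsto_const_nhds hlim'

theorem ProbabilityTheory.cdf_periodic_of_map_add_const {μ : Measure ℝ} [IsProbabilityMeasure μ]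
    {c : ℝ} (h : μ.map (· + c) = μ) : Function.Periodic (cdf μ) c := by
  intro x
  rw [cdf_eq_real, cdf_eq_real, measureReal_def, measureReal_def]
  conv_lhs => rw [← h]
  rw [Measure.map_apply (measurable_add_const c) measurableSet_Iic, Set.preimage_add_const_Iic,
    add_sub_cancel_right]

theorem MeasureTheory.Measure.map_add_const_ne_self (μ : Measure ℝ) [IsProbabilityMeasure μ]
    {c : ℝ} (hc : c ≠ 0) : μ.map (· + c) ≠ μ := by
  intro h
  have hone : ⇑(cdf μ) = fun _ => (1 : ℝ) :=
    funext ((cdf_periodic_of_map_add_const h).eq_of_tendsto_atTop hc (tendsto_cdf_atTop μ))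
  have hbot := tendsto_cdf_atBot μ
  rw [hone] at hbot
  exact one_ne_zero (tendsto_nhds_unique tendsto_const_nhds hbot)

/-- **Unresolved-discrimination example (Section 4.2).**
For the predictor `R a = λE * η + λX * (αX * a + β * η + NX)` with `αX ≠ 0`,
the law of `R a` is the same for all `a` iff `λX = 0`. -/
theorem unresolved_nondiscrimination_constraint_linear
    {Ω : Type*} [MeasureSpace Ω] [IsProbabilityMeasure (ℙ : Measure Ω)]
    (η NX : Ω → ℝ) (hη : Measurable η) (hNX : Measurable NX)
    (αX β lamE lamX : ℝ) (hαX : αX ≠ 0)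
    (R : ℝ → Ω → ℝ)
    (hR : ∀ a ω, R a ω = lamE * η ω + lamX * (αX * a + β * η ω + NX ω)) :
    (∀ a a' : ℝ, Measure.map (R a) (ℙ : Measure Ω) = Measure.map (R a') (ℙ : Measure Ω))
      ↔ lamX = 0 := by
  constructor
  · intro hlaw
    by_contra hlamX
    have hshift : ∀ a, R a = (· + lamX * αX * a) ∘ R 0 :=
      fun a => funext fun ω => by simp only [Function.comp_apply, hR]; ring
    have hR0 : Measurable (R 0) := by
      rw [funext (hR 0)]
      fun_prop
    have := Measure.isProbabilityMeasure_map (μ := ℙ) hR0.aemeasurable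
    apply ((ℙ : Measure Ω).map (R 0)).map_add_const_ne_self (mul_ne_zero hlamX hαX)
    rw [Measure.map_map (measurable_add_const _) hR0, ← mul_one (lamX * αX), ← hshift 1, hlaw]
  · rintro rfl a a'
    congr 1
    funext ω
    simp only [hR, zero_mul, add_zero]
end

section
/- Let W be a real random variable on a probability space, let h : ℝ → ℝ be continuous and strictly monotone, and let μ_R ∈ ℝ. For each p ∈ ℝ define R_p = h(W + μ_R·p). If the law of R_p is the same for all p ∈ ℝ, then μ_R = 0, so that R_p = h(W) for every p. -/
/-!
Write `ν` for the law of `W`. The law of `R p` is the pushforward under `h` of `ν` translated by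
`μR * p`, and `h`, being strictly monotone, is a measurable embedding, so pushing forward along
it is injective. If `μR ≠ 0`, the shifts `μR * p` exhaust `ℝ`, hence `ν` would be invariant
under every translation; its distribution function would then be constant, which is impossible
since it tends to `0` at `-∞` and to `1` at `+∞`.
-/

open MeasureTheory ProbabilityTheory Filter Set Topology

section MeasurableEmbedding

variable {α β : Type*} [LinearOrder α] [TopologicalSpace α] [OrderClosedTopology α]
  [PolishSpace α] [MeasurableSpace α] [BorelSpace α]
  [LinearOrder β] [TopologicalSpace β] [OrderTopology β] [SecondCountableTopology β]
  [MeasurableSpace β] [BorelSpace β] {f : α → β}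

theorem StrictMono.measurableEmbedding (hf : StrictMono f) : MeasurableEmbedding f :=
  hf.monotone.measurable.measurableEmbedding hf.injective

theorem StrictAnti.measurableEmbedding (hf : StrictAnti f) : MeasurableEmbedding f :=
  hf.antitone.measurable.measurableEmbedding hf.injective

end MeasurableEmbedding

theorem ProbabilityTheory.exists_map_add_const_ne (ν : Measure ℝ) [IsProbabilityMeasure ν] :
    ∃ t : ℝ, ν.map (· + t) ≠ ν := by
  by_contra! hinv
  have hconst : ∀ x, cdf ν x = cdf ν 0 := fun x ↦ by
    calc cdf ν x = (ν.map (· + x)).real (Iic x) := by rw [hinv, cdf_eq_real]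
      _ = cdf ν 0 := by
        rw [map_measureReal_apply (measurable_add_const x) measurableSet_Iic, cdf_eq_real]
        congr 1
        ext y
        simp
  have hlim : ∀ l : Filter ℝ, Tendsto (cdf ν) l (𝓝 (cdf ν 0)) := fun l ↦
    tendsto_const_nhds.congr fun x ↦ (hconst x).symm
  exact zero_ne_one <| (tendsto_nhds_unique (tendsto_cdf_atBot ν) (hlim _)).trans
    (tendsto_nhds_unique (tendsto_cdf_atTop ν) (hlim _)).symm

theorem shift_zero_of_laws_eq_general
    {Ω : Type*} [MeasureSpace Ω] [IsProbabilityMeasure (ℙ : Measure Ω)]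
    (W : Ω → ℝ) (hW : Measurable W)
    (h : ℝ → ℝ) (hmono : StrictMono h ∨ StrictAnti h)
    (μR : ℝ)
    (R : ℝ → Ω → ℝ) (hR : ∀ p ω, R p ω = h (W ω + μR * p))
    (hlaw : ∀ p p' : ℝ,
      Measure.map (R p) (ℙ : Measure Ω) = Measure.map (R p') (ℙ : Measure Ω)) :
    μR = 0 ∧ ∀ p ω, R p ω = h (W ω) := by
  have hh : MeasurableEmbedding h :=
    hmono.elim StrictMono.measurableEmbedding StrictAnti.measurableEmbedding
  set ν := (ℙ : Measure Ω).map W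
  have hlaw_R : ∀ p, (ℙ : Measure Ω).map (R p) = (ν.map (· + μR * p)).map h := by
    intro p
    rw [Measure.map_map hh.measurable (measurable_add_const _), Measure.map_map (by fun_prop) hW]
    exact congrArg (Measure.map · ℙ) (funext (hR p))
  have hμR : μR = 0 := by
    by_contra hμR
    have : IsProbabilityMeasure ν := Measure.isProbabilityMeasure_map hW.aemeasurable
    obtain ⟨t, ht⟩ := exists_map_add_const_ne ν
    have hshift := hlaw (t / μR) 0
    rw [hlaw_R, hlaw_R, mul_div_cancel₀ t hμR, mul_zero] at hshift
    simp only [add_zero, Measure.map_id'] at hshift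
    exact ht (hh.map_injective hshift)
  exact ⟨hμR, fun p ω ↦ by rw [hR, hμR, zero_mul, add_zero]⟩

/-- **Core of the supplementary theorem.** For `R p = h (W + μR * p)` with `h`
continuous and strictly monotone, if the law of `R p` is the same for all `p`,
then `μR = 0`, so that `R p = h ∘ W` for every `p`. -/
theorem shift_zero_of_laws_eq
    {Ω : Type*} [MeasureSpace Ω] [IsProbabilityMeasure (ℙ : Measure Ω)]
    (W : Ω → ℝ) (hW : Measurable W)
    (h : ℝ → ℝ) (hcont : Continuous h) (hmono : StrictMono h ∨ StrictAnti h)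
    (μR : ℝ)
    (R : ℝ → Ω → ℝ) (hR : ∀ p ω, R p ω = h (W ω + μR * p))
    (hlaw : ∀ p p' : ℝ,
      Measure.map (R p) (ℙ : Measure Ω) = Measure.map (R p') (ℙ : Measure Ω)) :
    μR = 0 ∧ ∀ p ω, R p ω = h (W ω) :=
  shift_zero_of_laws_eq_general W hW h hmono μR R hR hlaw
end

section
/- Let σ(t) = 1/(1 + exp(−t)) and φ(u) = exp(−u²/2)/√(2π). For all x ∈ ℝ, all a ∈ ℝ and all y ∈ {−1, 1}: (σ(2a)·φ(x − a − 1) + σ(−2a)·φ(x − a + 1))·σ(2·x·y) = σ(2·a·y)·φ(x − a − y). -/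
open Real

/-- The logistic sigmoid `σ(t) = 1 / (1 + exp (-t))`. -/
noncomputable def sigmoid (t : ℝ) : ℝ := 1 / (1 + Real.exp (-t))

/-- The standard Gaussian density `φ(u) = exp (-u² / 2) / √(2π)`. -/
noncomputable def gaussPdf (u : ℝ) : ℝ :=
  Real.exp (-u ^ 2 / 2) / Real.sqrt (2 * Real.pi)

/-!
With `σ(2s) = eˢ / (2 cosh s)` and `φ(t - c) = φ(t) e^{ct} e^{-c²/2}`, the mixture
`σ(2a) φ(t - 1) + σ(-2a) φ(t + 1)` at `t = x - a` collapses to `φ(t) e^{-1/2} cosh x / cosh a`.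
Multiplying by `σ(2xy) = e^{xy} / (2 cosh x)` (valid since `y = ±1`) cancels `cosh x`, and
`e^{xy} = e^{ay} e^{yt}` together with `y² = 1` turns the result into `σ(2ay) φ(t - y)`.
-/

theorem sigmoid_two_mul (s : ℝ) : _root_.sigmoid (2 * s) = exp s / (2 * cosh s) := by
  rw [_root_.sigmoid, cosh_eq, show -(2 * s) = -s + -s by ring, exp_add]
  have h : exp s * exp (-s) = 1 := by rw [← exp_add, add_neg_cancel, exp_zero]
  field_simp
  linear_combination (-exp (-s)) * h

theorem sigmoid_two_mul_mul_of_sq_eq_one {y : ℝ} (hy : y ^ 2 = 1) (s : ℝ) :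
    _root_.sigmoid (2 * s * y) = exp (s * y) / (2 * cosh s) := by
  have hcosh : cosh (s * y) = cosh s := by rcases sq_eq_one_iff.mp hy with rfl | rfl <;> simp
  rw [mul_assoc, sigmoid_two_mul, hcosh]

theorem gaussPdf_sub (t c : ℝ) :
    gaussPdf (t - c) = gaussPdf t * exp (c * t) * exp (-c ^ 2 / 2) := by
  rw [gaussPdf, gaussPdf, div_mul_eq_mul_div, div_mul_eq_mul_div, ← exp_add, ← exp_add]
  ring_nf

theorem sigmoid_mul_gaussPdf_add_sigmoid_mul_gaussPdf (a t : ℝ) :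
    _root_.sigmoid (2 * a) * gaussPdf (t - 1) + _root_.sigmoid (-(2 * a)) * gaussPdf (t + 1) =
      gaussPdf t * exp (-1 / 2) * cosh (a + t) / cosh a := by
  rw [← mul_neg, sigmoid_two_mul, sigmoid_two_mul, cosh_neg, ← sub_neg_eq_add t 1,
    gaussPdf_sub, gaussPdf_sub, cosh_eq (a + t), neg_add, exp_add, exp_add]
  have : cosh a ≠ 0 := (cosh_pos a).ne'
  field_simp

/-- **Density identity in the proof of Theorem 1.** The joint density of
`(X₁, Y)` given `A = a` in the left causal model (mixture of Gaussians for
`X₁`, then `Y = y` with probability `σ(2x₁y)`) equals the joint density of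
`(X₁, Y)` given `A = a` in the right causal model (`Y = y` with probability
`σ(2ay)`, `X₂ ~ N(y, 1)`, `X₁ = A + X₂`). -/
theorem density_identity (x a : ℝ) (y : ℝ) (hy : y = -1 ∨ y = 1) :
    (_root_.sigmoid (2 * a) * gaussPdf (x - a - 1) + _root_.sigmoid (-(2 * a)) * gaussPdf (x - a + 1)) *
        _root_.sigmoid (2 * x * y) =
      _root_.sigmoid (2 * a * y) * gaussPdf (x - a - y) := by
  have hy_sq : y ^ 2 = 1 := by rcases hy with rfl | rfl <;> norm_num
  have hexp : exp (x * y) = exp (a * y) * exp (y * (x - a)) := by rw [← exp_add]; ring_nf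
  rw [sigmoid_mul_gaussPdf_add_sigmoid_mul_gaussPdf, add_sub_cancel, gaussPdf_sub (x - a) y,
    sigmoid_two_mul_mul_of_sq_eq_one hy_sq, sigmoid_two_mul_mul_of_sq_eq_one hy_sq, hy_sq, hexp]
  have : cosh a ≠ 0 := (cosh_pos a).ne'
  have : cosh x ≠ 0 := (cosh_pos x).ne'
  field_simp
end

section
/- Let σ(t) = 1/(1 + exp(−t)) and φ(u) = exp(−u²/2)/√(2π). On the space {−1,1} × ℝ × {−1,1} equipped with the product of counting measure, Lebesgue measure, and counting measure, let μ_L be the measure with density (a, x, y) ↦ (1/2)·(σ(2a)·φ(x − a − 1) + σ(−2a)·φ(x − a + 1))·σ(2·x·y), and let μ_R be the measure with density (a, x, y) ↦ (1/2)·σ(2·a·y)·φ(x − a − y). Then μ_L = μ_R, and both are probability measures. -/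
open MeasureTheory

/-- The two-point space `{-1, 1} ⊆ ℝ`. -/
abbrev TwoPoint : Type := ({-1, 1} : Set ℝ)

/-- The product of counting measure, Lebesgue measure and counting measure on
`{-1, 1} × ℝ × {-1, 1}`. -/
noncomputable def baseMeasure : Measure (TwoPoint × ℝ × TwoPoint) :=
  (Measure.count : Measure TwoPoint).prod
    ((volume : Measure ℝ).prod (Measure.count : Measure TwoPoint))

/-!
In the right model the posterior of `Y` given `(A, X₁) = (a, x)` is proportional to
`σ(2ay) φ(x - a - y) ∝ exp(ay) exp(-(x - a - y)² / 2) ∝ exp(xy)` because `y² = 1`, so it is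
`σ(2xy)`, the left model's law of `Y` given `X₁ = x`; and the law of `X₁` given `A = a` is the same
two-component Gaussian mixture in both models. The total mass is computed by integrating out `x`,
then `y` (using `σ(t) + σ(-t) = 1`), then `a`.
-/

open ProbabilityTheory
open scoped ENNReal

noncomputable def densityL (a x y : ℝ) : ℝ :=
  (1 / 2) * (sigmoid (2 * a) * gaussPdf (x - a - 1) + sigmoid (-(2 * a)) * gaussPdf (x - a + 1)) *
    sigmoid (2 * x * y)

noncomputable def densityR (a x y : ℝ) : ℝ :=
  (1 / 2) * sigmoid (2 * a * y) * gaussPdf (x - a - y)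

lemma sigmoid_eq_real_sigmoid : sigmoid = Real.sigmoid := funext fun _ => one_div _

lemma sigmoid_nonneg (t : ℝ) : 0 ≤ sigmoid t := sigmoid_eq_real_sigmoid ▸ Real.sigmoid_nonneg t

lemma sigmoid_add_sigmoid_neg (t : ℝ) : sigmoid t + sigmoid (-t) = 1 := by
  rw [sigmoid_eq_real_sigmoid, Real.sigmoid_neg]
  ring

lemma sigmoid_eq_exp_mul_sigmoid_neg (t : ℝ) : sigmoid t = Real.exp t * sigmoid (-t) := by
  rw [sigmoid_eq_real_sigmoid, ← Real.sigmoid_mul_rexp_neg, mul_left_comm, ← Real.exp_add,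
    add_neg_cancel, Real.exp_zero, mul_one]

@[fun_prop]
lemma measurable_sigmoid : Measurable sigmoid :=
  sigmoid_eq_real_sigmoid ▸ continuous_sigmoid.measurable

@[fun_prop]
lemma measurable_gaussPdf : Measurable gaussPdf := by
  unfold gaussPdf
  fun_prop

lemma gaussPdf_sub_eq_exp_mul (u y : ℝ) :
    gaussPdf (u - y) = Real.exp (2 * u * y) * gaussPdf (u + y) := by
  unfold gaussPdf
  rw [← mul_div_assoc, ← Real.exp_add]
  ring_nf

lemma gaussPdf_sub_eq_gaussianPDFReal (x s : ℝ) : gaussPdf (x - s) = gaussianPDFReal s 1 x := by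
  simp [gaussPdf, gaussianPDFReal, div_eq_inv_mul]

lemma lintegral_ofReal_mul_gaussPdf_sub {c : ℝ} (hc : 0 ≤ c) (s : ℝ) :
    ∫⁻ x, ENNReal.ofReal (c * gaussPdf (x - s)) = ENNReal.ofReal c := by
  simp_rw [ENNReal.ofReal_mul hc, gaussPdf_sub_eq_gaussianPDFReal]
  rw [lintegral_const_mul _ (by fun_prop), lintegral_gaussianPDFReal_eq_one s one_ne_zero, mul_one]

lemma sigmoid_mul_gaussPdf_mul_sigmoid_neg (a x y : ℝ) :
    sigmoid (2 * a * y) * gaussPdf (x - a - y) * sigmoid (-(2 * x * y)) =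
      sigmoid (-(2 * a * y)) * gaussPdf (x - a + y) * sigmoid (2 * x * y) := by
  have hexp : Real.exp (2 * a * y) * Real.exp (2 * (x - a) * y) = Real.exp (2 * x * y) := by
    rw [← Real.exp_add]
    ring_nf
  rw [sigmoid_eq_exp_mul_sigmoid_neg (2 * a * y), sigmoid_eq_exp_mul_sigmoid_neg (2 * x * y),
    gaussPdf_sub_eq_exp_mul]
  linear_combination sigmoid (-(2 * a * y)) * gaussPdf (x - a + y) * sigmoid (-(2 * x * y)) * hexp

lemma mixture_mul_sigmoid (a x y : ℝ) :
    (sigmoid (2 * a * y) * gaussPdf (x - a - y) + sigmoid (-(2 * a * y)) * gaussPdf (x - a + y)) *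
      sigmoid (2 * x * y) = sigmoid (2 * a * y) * gaussPdf (x - a - y) := by
  linear_combination -sigmoid_mul_gaussPdf_mul_sigmoid_neg a x y +
    sigmoid (2 * a * y) * gaussPdf (x - a - y) * sigmoid_add_sigmoid_neg (2 * x * y)

lemma mixture_eq_of_mem_twoPoint (a x : ℝ) {y : ℝ} (hy : y ∈ ({-1, 1} : Set ℝ)) :
    sigmoid (2 * a) * gaussPdf (x - a - 1) + sigmoid (-(2 * a)) * gaussPdf (x - a + 1) =
      sigmoid (2 * a * y) * gaussPdf (x - a - y) + sigmoid (-(2 * a * y)) * gaussPdf (x - a + y) := by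
  rcases hy with rfl | rfl <;> ring_nf

lemma densityL_eq_densityR (a x : ℝ) {y : ℝ} (hy : y ∈ ({-1, 1} : Set ℝ)) :
    densityL a x y = densityR a x y := by
  rw [densityL, densityR, mixture_eq_of_mem_twoPoint a x hy, mul_assoc (1 / 2 : ℝ),
    mixture_mul_sigmoid, ← mul_assoc]

lemma tsum_twoPoint {M : Type*} [AddCommMonoid M] [TopologicalSpace M] (f : TwoPoint → M) :
    ∑' y, f y = f ⟨-1, by simp⟩ + f ⟨1, by simp⟩ := by
  rw [tsum_fintype, Fintype.sum_eq_add ⟨-1, by simp⟩ ⟨1, by simp⟩ (by norm_num [Subtype.ext_iff])]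
  rintro ⟨y, rfl | rfl⟩ ⟨h₁, h₂⟩ <;> simp_all

lemma lintegral_baseMeasure {f : TwoPoint × ℝ × TwoPoint → ℝ≥0∞} (hf : Measurable f) :
    ∫⁻ q, f q ∂baseMeasure = ∑' a, ∑' y, ∫⁻ x, f (a, x, y) := by
  rw [baseMeasure, lintegral_prod _ hf.aemeasurable, lintegral_count]
  congr 1 with a
  exact (lintegral_prod_symm _ (hf.comp measurable_prodMk_left).aemeasurable).trans
    (lintegral_count _)

lemma lintegral_densityR_eq_one :
    ∫⁻ q : TwoPoint × ℝ × TwoPoint, ENNReal.ofReal (densityR q.1 q.2.1 q.2.2) ∂baseMeasure = 1 := by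
  have hx (a y : ℝ) : ∫⁻ x, ENNReal.ofReal (densityR a x y) =
      ENNReal.ofReal ((1 / 2) * sigmoid (2 * a * y)) := by
    simp_rw [densityR, sub_sub]
    exact lintegral_ofReal_mul_gaussPdf_sub (mul_nonneg (by norm_num) (sigmoid_nonneg _)) _
  have hy (a : ℝ) : ENNReal.ofReal ((1 / 2) * sigmoid (2 * a * -1)) +
      ENNReal.ofReal ((1 / 2) * sigmoid (2 * a * 1)) = ENNReal.ofReal (1 / 2) := by
    rw [← ENNReal.ofReal_add (mul_nonneg (by norm_num) (sigmoid_nonneg _))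
      (mul_nonneg (by norm_num) (sigmoid_nonneg _)), ← mul_add, mul_neg_one, mul_one, add_comm,
      sigmoid_add_sigmoid_neg, mul_one]
  rw [lintegral_baseMeasure (by unfold densityR; fun_prop)]
  simp only [hx, tsum_twoPoint, hy]
  rw [← ENNReal.ofReal_add (by norm_num) (by norm_num)]
  norm_num

/-- **Theorem 1 (unidentifiability), measure-theoretic form.** The joint law
`μL` of `(A, X₁, Y)` in the left structural equation model and the joint law
`μR` of `(A, X₁, Y)` in the right structural equation model, expressed via
their densities w.r.t. counting × Lebesgue × counting measure on
`{-1,1} × ℝ × {-1,1}`, coincide, and both are probability measures. -/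
theorem unidentifiability
    (μL μR : Measure (TwoPoint × ℝ × TwoPoint))
    (hμL : μL = baseMeasure.withDensity (fun q => ENNReal.ofReal
      ((1 / 2) * (sigmoid (2 * (q.1 : ℝ)) * gaussPdf (q.2.1 - (q.1 : ℝ) - 1) +
          sigmoid (-(2 * (q.1 : ℝ))) * gaussPdf (q.2.1 - (q.1 : ℝ) + 1)) *
        sigmoid (2 * q.2.1 * (q.2.2 : ℝ)))))
    (hμR : μR = baseMeasure.withDensity (fun q => ENNReal.ofReal
      ((1 / 2) * sigmoid (2 * (q.1 : ℝ) * (q.2.2 : ℝ)) *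
        gaussPdf (q.2.1 - (q.1 : ℝ) - (q.2.2 : ℝ))))) :
    μL = μR ∧ IsProbabilityMeasure μL ∧ IsProbabilityMeasure μR := by
  have hLR : μL = μR := by
    rw [hμL, hμR]
    congr 1 with q
    exact congrArg ENNReal.ofReal (densityL_eq_densityR _ _ q.2.2.2)
  have hR : IsProbabilityMeasure μR := ⟨by
    rw [hμR, withDensity_apply _ MeasurableSet.univ, Measure.restrict_univ]
    exact lintegral_densityR_eq_one⟩
  exact ⟨hLR, hLR ▸ hR, hR⟩
end
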